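/- Let c ≥ 0 and p0 ≥ c, let D : ℝ → ℝ, and D0, D1 : ℝ × ℝ → ℝ. Suppose D1 is (Fréchet) differentiable at (p0, p0), D1(p, p) = D(p) for all p, x ↦ D1(x, y) is nondecreasing for each y, y ↦ D0(x, y) is nondecreasing for each x, and ∂D0/∂y exists at (p0, p0). Then the naive profit estimator underestimates the profit treatment effect: D(p0) + (p0 − c)·(∂D1/∂y(p0, p0) − ∂D0/∂y(p0, p0)) ≤ D(p0) + (p0 − c)·D'(p0). -/

import Mathlib

/-! Along the diagonal `D' = ∂ₓD1 + ∂ᵧD1`, and monotonicity makes `∂ₓD1` and `∂ᵧD0` nonnegative,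
so `∂ᵧD1 - ∂ᵧD0 ≤ D'`; multiplying by the nonnegative margin `p0 - c` gives the claim. -/

section SliceDerivatives

variable {𝕜 F : Type*} [NontriviallyNormedField 𝕜] [NormedAddCommGroup F] [NormedSpace 𝕜 F]
  {f : 𝕜 × 𝕜 → F} {L : 𝕜 × 𝕜 →L[𝕜] F}

theorem HasFDerivAt.hasDerivAt_diag {x : 𝕜} (hf : HasFDerivAt f L (x, x)) :
    HasDerivAt (fun t => f (t, t)) (L (1, 1)) x :=
  hf.comp_hasDerivAt_of_eq x ((hasDerivAt_id' x).prodMk (hasDerivAt_id' x)) rfl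

theorem HasFDerivAt.hasDerivAt_fst_slice {x y : 𝕜} (hf : HasFDerivAt f L (x, y)) :
    HasDerivAt (fun t => f (t, y)) (L (1, 0)) x :=
  hf.comp_hasDerivAt_of_eq x ((hasDerivAt_id' x).prodMk (hasDerivAt_const x y)) rfl

end SliceDerivatives

theorem naive_profit_estimator_underestimates_general
    (c p0 : ℝ) (hp0 : c ≤ p0)
    (D : ℝ → ℝ) (D0 D1 : ℝ × ℝ → ℝ)
    (L : ℝ × ℝ →L[ℝ] ℝ) (d0y : ℝ)
    (hD1 : HasFDerivAt D1 L (p0, p0))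
    (hdiag : ∀ p : ℝ, D1 (p, p) = D p)
    (hmono1 : ∀ y : ℝ, Monotone (fun x => D1 (x, y)))
    (hmono0 : ∀ x : ℝ, Monotone (fun y => D0 (x, y)))
    (hD0 : HasDerivAt (fun y => D0 (p0, y)) d0y p0) :
    D p0 + (p0 - c) * (L (0, 1) - d0y) ≤ D p0 + (p0 - c) * deriv D p0 := by
  have hD : HasDerivAt D (L (1, 1)) p0 := by
    simpa only [hdiag] using hD1.hasDerivAt_diag
  have hown : 0 ≤ L (1, 0) := hD1.hasDerivAt_fst_slice.nonneg_of_monotone (hmono1 p0)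
  have hcross : 0 ≤ d0y := hD0.nonneg_of_monotone (hmono0 p0)
  have hsplit : L (1, 1) = L (1, 0) + L (0, 1) := by
    rw [← map_add, Prod.mk_add_mk, add_zero, zero_add]
  have hmargin : 0 ≤ p0 - c := sub_nonneg.2 hp0
  rw [hD.deriv]
  gcongr
  linarith

/-- the naive profit estimator underestimates the profit
treatment effect. -/
theorem naive_profit_estimator_underestimates
    (c p0 : ℝ) (hc : 0 ≤ c) (hp0 : c ≤ p0)
    (D : ℝ → ℝ) (D0 D1 : ℝ × ℝ → ℝ)
    (L : ℝ × ℝ →L[ℝ] ℝ) (d0y : ℝ)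
    (hD1 : HasFDerivAt D1 L (p0, p0))
    (hdiag : ∀ p : ℝ, D1 (p, p) = D p)
    (hmono1 : ∀ y : ℝ, Monotone (fun x => D1 (x, y)))
    (hmono0 : ∀ x : ℝ, Monotone (fun y => D0 (x, y)))
    (hD0 : HasDerivAt (fun y => D0 (p0, y)) d0y p0) :
    D p0 + (p0 - c) * (L (0, 1) - d0y) ≤ D p0 + (p0 - c) * deriv D p0 :=
  naive_profit_estimator_underestimates_general c p0 hp0 D D0 D1 L d0y hD1 hdiag hmono1 hmono0 hD0
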